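/- arXiv:2407.12311 — 7 statements merged into one kernel-verified Lean document; each statement's English description precedes it below -/
import Mathlib

section
/- Let u ∈ X_JK and let p be a positive integer. Then ‖u‖_{2p,h}^{2p} ≤ (p²/8) · ‖u‖_{2(p−1),h}^{2(p−1)} · ‖δ⁺u‖²_{2,h}. -/
noncomputable section

open Finset Complex ComplexConjugate

/-- Membership in the space `X_JK`: complex arrays vanishing on the boundary of the grid. -/
def memX (J K : ℕ) (u : ℕ → ℕ → ℂ) : Prop :=
  (∀ k, u 0 k = 0) ∧ (∀ k, u J k = 0) ∧ (∀ j, u j 0 = 0) ∧ (∀ j, u j K = 0)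

/-- `normP Δx Δy J K p u = ‖u‖_{p,h}^p`. -/
def normP (Δx Δy : ℝ) (J K : ℕ) (p : ℕ) (u : ℕ → ℕ → ℂ) : ℝ :=
  Δx * Δy * ∑ j ∈ range J, ∑ k ∈ range K, ‖u j k‖ ^ p

/-- `gradSq Δx Δy J K u = ‖δ⁺u‖²_{2,h}`. -/
def gradSq (Δx Δy : ℝ) (J K : ℕ) (u : ℕ → ℕ → ℂ) : ℝ :=
  Δx * Δy * ∑ j ∈ range J, ∑ k ∈ range K,
    (‖(u (j + 1) k - u j k) / (Δx : ℂ)‖ ^ 2 +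
      ‖(u j (k + 1) - u j k) / (Δy : ℂ)‖ ^ 2)

/-- The discrete energy `E_h(u)`. -/
def energy (Δx Δy : ℝ) (J K : ℕ) (lam ν : ℝ) (u : ℕ → ℕ → ℂ) : ℝ :=
  gradSq Δx Δy J K u - lam / 2 * normP Δx Δy J K 4 u + ν / 3 * normP Δx Δy J K 6 u

/-- The discrete Laplacian `δ² = δ²_x + δ²_y` (at interior indices). -/
def delta2 (Δx Δy : ℝ) (u : ℕ → ℕ → ℂ) (j k : ℕ) : ℂ :=
  (u (j + 1) k - 2 * u j k + u (j - 1) k) / (Δx : ℂ) ^ 2 +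
    (u j (k + 1) - 2 * u j k + u j (k - 1)) / (Δy : ℂ) ^ 2

/-- `ψ₁(z,w) = ((|z|² + |w|²)/2)·((z+w)/2)`. -/
def psi1 (z w : ℂ) : ℂ :=
  (((‖z‖ ^ 2 + ‖w‖ ^ 2) / 2 : ℝ) : ℂ) * ((z + w) / 2)

/-- `ψ₂(z,w) = ((|z|⁴ + |z|²|w|² + |w|⁴)/3)·((z+w)/2)`. -/
def psi2 (z w : ℂ) : ℂ :=
  (((‖z‖ ^ 4 + ‖z‖ ^ 2 * ‖w‖ ^ 2 + ‖w‖ ^ 4) / 3 : ℝ) : ℂ) *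
    ((z + w) / 2)

/-- `φ(z,w) = |(z+w)/2|²·((z+w)/2)`. -/
def phi (z w : ℂ) : ℂ :=
  ((‖(z + w) / 2‖ ^ 2 : ℝ) : ℂ) * ((z + w) / 2)

/-- One Crank–Nicolson step equation: `W` is the next level, `V` the current one. -/
def stepEq (Δx Δy : ℝ) (J K : ℕ) (lam ν ε τ : ℝ) (W V : ℕ → ℕ → ℂ) : Prop :=
  ∀ j k : ℕ, 1 ≤ j → j ≤ J - 1 → 1 ≤ k → k ≤ K - 1 →
    Complex.I * (W j k - V j k) / (τ : ℂ) +
      delta2 Δx Δy (fun j' k' => (W j' k' + V j' k') / 2) j k +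
      (lam : ℂ) * psi1 (W j k) (V j k) - (ν : ℂ) * psi2 (W j k) (V j k) +
      Complex.I * (ε : ℂ) * phi (W j k) (V j k) = 0

/-- A CNFD solution `U⁰, …, U^N`. -/
def isCNFD (Δx Δy : ℝ) (J K : ℕ) (lam ν ε τ : ℝ) (N : ℕ) (U : ℕ → ℕ → ℕ → ℂ) : Prop :=
  (∀ n, n ≤ N → memX J K (U n)) ∧
    ∀ n, n < N → stepEq Δx Δy J K lam ν ε τ (U (n + 1)) (U n)

/-!
Put `F = |u|^p`. Telescoping along a grid line from either end bounds `2|F_{j,k}|` by the total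
variation of `F` along that line; multiplying the bounds for the two directions and summing gives
the discrete Ladyzhenskaya inequality `4 ‖F‖₂² ≤ ‖δ⁺_x F‖₁ ‖δ⁺_y F‖₁`. The bound
`||z|^p - |w|^p| ≤ (p/2)(|z|^(p-1) + |w|^(p-1)) |z - w|` and Cauchy–Schwarz control each
`‖δ⁺ F‖₁` by `p ‖u‖_{2(p-1)}^(p-1) ‖δ⁺u‖₂` in that direction, and AM–GM with the weights
`Δy/Δx`, `Δx/Δy` turns the product of the two directional gradient norms into `‖δ⁺u‖²_{2,h}`.
-/

lemma two_mul_abs_le_sum_abs_sub {g : ℕ → ℝ} {n : ℕ} (h0 : g 0 = 0) (hn : g n = 0) {j : ℕ}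
    (hj : j ≤ n) : 2 * |g j| ≤ ∑ i ∈ range n, |g (i + 1) - g i| := by
  have hleft : |g j| ≤ ∑ i ∈ range j, |g (i + 1) - g i| := by
    calc |g j| = |∑ i ∈ range j, (g (i + 1) - g i)| := by rw [sum_range_sub, h0, sub_zero]
      _ ≤ _ := abs_sum_le_sum_abs _ _
  have hright : |g j| ≤ ∑ i ∈ Ico j n, |g (i + 1) - g i| := by
    calc |g j| = |∑ i ∈ Ico j n, (g (i + 1) - g i)| := by
          rw [sum_Ico_eq_sub _ hj, sum_range_sub, sum_range_sub, h0, hn]; simp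
      _ ≤ _ := abs_sum_le_sum_abs _ _
  rw [← sum_range_add_sum_Ico _ hj]
  linarith

lemma four_mul_sum_sq_le_mul {f : ℕ → ℕ → ℝ} {J K : ℕ} (h0 : ∀ k, f 0 k = 0)
    (hJ : ∀ k, f J k = 0) (h0' : ∀ j, f j 0 = 0) (hK : ∀ j, f j K = 0) :
    4 * ∑ j ∈ range J, ∑ k ∈ range K, f j k ^ 2 ≤
      (∑ j ∈ range J, ∑ k ∈ range K, |f (j + 1) k - f j k|) *
        ∑ j ∈ range J, ∑ k ∈ range K, |f j (k + 1) - f j k| := by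
  set X : ℕ → ℝ := fun k ↦ ∑ j ∈ range J, |f (j + 1) k - f j k|
  set Y : ℕ → ℝ := fun j ↦ ∑ k ∈ range K, |f j (k + 1) - f j k|
  have hpoint : ∀ j ∈ range J, ∀ k ∈ range K, 4 * f j k ^ 2 ≤ Y j * X k := by
    intro j hj k hk
    have hx := two_mul_abs_le_sum_abs_sub (g := fun i ↦ f i k) (h0 k) (hJ k) (mem_range.1 hj).le
    have hy := two_mul_abs_le_sum_abs_sub (g := f j) (h0' j) (hK j) (mem_range.1 hk).le
    calc 4 * f j k ^ 2 = (2 * |f j k|) * (2 * |f j k|) := by rw [← sq_abs]; ring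
      _ ≤ Y j * X k := mul_le_mul hy hx (by positivity) (by positivity)
  calc 4 * ∑ j ∈ range J, ∑ k ∈ range K, f j k ^ 2
      = ∑ j ∈ range J, ∑ k ∈ range K, 4 * f j k ^ 2 := by simp only [mul_sum]
    _ ≤ ∑ j ∈ range J, ∑ k ∈ range K, Y j * X k := sum_le_sum fun j hj ↦ sum_le_sum (hpoint j hj)
    _ = (∑ j ∈ range J, Y j) * ∑ k ∈ range K, X k := (sum_mul_sum _ _ _ _).symm
    _ = _ := by rw [mul_comm, sum_comm]

lemma pow_mul_pow_add_pow_mul_pow_le {x y : ℝ} (hx : 0 ≤ x) (hy : 0 ≤ y) (i j : ℕ) :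
    x ^ i * y ^ j + x ^ j * y ^ i ≤ x ^ (i + j) + y ^ (i + j) := by
  have h : 0 ≤ (x ^ i - y ^ i) * (x ^ j - y ^ j) := by
    rcases le_total x y with hxy | hxy
    · exact mul_nonneg_of_nonpos_of_nonpos (sub_nonpos.2 (pow_le_pow_left₀ hx hxy i))
        (sub_nonpos.2 (pow_le_pow_left₀ hx hxy j))
    · exact mul_nonneg (sub_nonneg.2 (pow_le_pow_left₀ hy hxy i))
        (sub_nonneg.2 (pow_le_pow_left₀ hy hxy j))
  rw [pow_add, pow_add]
  linarith

lemma abs_pow_sub_pow_le_mul_pow_add_pow {x y : ℝ} (hx : 0 ≤ x) (hy : 0 ≤ y) (p : ℕ) :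
    |x ^ p - y ^ p| ≤ p / 2 * (x ^ (p - 1) + y ^ (p - 1)) * |x - y| := by
  have hgeom : 2 * ∑ i ∈ range p, x ^ i * y ^ (p - 1 - i) ≤ p * (x ^ (p - 1) + y ^ (p - 1)) :=
    calc 2 * ∑ i ∈ range p, x ^ i * y ^ (p - 1 - i)
        = ∑ i ∈ range p, (x ^ i * y ^ (p - 1 - i) + x ^ (p - 1 - i) * y ^ i) := by
          rw [two_mul, sum_add_distrib]
          congr 1
          rw [← sum_range_reflect]
          refine sum_congr rfl fun i hi ↦ ?_
          rw [Nat.sub_sub_self (Nat.le_sub_one_of_lt (mem_range.1 hi))]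
      _ ≤ ∑ _i ∈ range p, (x ^ (p - 1) + y ^ (p - 1)) := by
          refine sum_le_sum fun i hi ↦ ?_
          have := pow_mul_pow_add_pow_mul_pow_le hx hy i (p - 1 - i)
          rwa [Nat.add_sub_cancel' (Nat.le_sub_one_of_lt (mem_range.1 hi))] at this
      _ = p * (x ^ (p - 1) + y ^ (p - 1)) := by rw [sum_const, card_range, nsmul_eq_mul]
  rw [← geom_sum₂_mul, abs_mul, abs_of_nonneg (sum_nonneg fun i _ ↦ by positivity)]
  exact mul_le_mul_of_nonneg_right (by linarith) (abs_nonneg _)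

lemma sq_sum_abs_sub_norm_pow_le {E : Type*} [SeminormedAddCommGroup E] {u : ℕ → ℕ → E}
    {J : ℕ} (h0 : ∀ k, u 0 k = 0) (hJ : ∀ k, u J k = 0) (K p : ℕ) :
    (∑ j ∈ range J, ∑ k ∈ range K, |‖u (j + 1) k‖ ^ p - ‖u j k‖ ^ p|) ^ 2 ≤
      p ^ 2 * (∑ j ∈ range J, ∑ k ∈ range K, ‖u j k‖ ^ (2 * (p - 1))) *
        ∑ j ∈ range J, ∑ k ∈ range K, ‖u (j + 1) k - u j k‖ ^ 2 := by
  set s := range J ×ˢ range K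
  set M := ∑ j ∈ range J, ∑ k ∈ range K, ‖u j k‖ ^ (2 * (p - 1))
  set D := ∑ j ∈ range J, ∑ k ∈ range K, ‖u (j + 1) k - u j k‖ ^ 2
  set a : ℕ × ℕ → ℝ := fun q ↦ ‖u (q.1 + 1) q.2‖ ^ (p - 1) + ‖u q.1 q.2‖ ^ (p - 1)
  set g : ℕ × ℕ → ℝ := fun q ↦ ‖u (q.1 + 1) q.2 - u q.1 q.2‖
  have hdiff : ∑ j ∈ range J, ∑ k ∈ range K, |‖u (j + 1) k‖ ^ p - ‖u j k‖ ^ p| ≤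
      p / 2 * ∑ q ∈ s, a q * g q := by
    rw [sum_product, mul_sum]
    refine sum_le_sum fun j _ ↦ ?_
    rw [mul_sum]
    refine sum_le_sum fun k _ ↦ ?_
    calc |‖u (j + 1) k‖ ^ p - ‖u j k‖ ^ p|
        ≤ p / 2 * a (j, k) * |‖u (j + 1) k‖ - ‖u j k‖| :=
          abs_pow_sub_pow_le_mul_pow_add_pow (norm_nonneg _) (norm_nonneg _) p
      _ ≤ p / 2 * a (j, k) * g (j, k) := by gcongr; exact abs_norm_sub_norm_le _ _
      _ = p / 2 * (a (j, k) * g (j, k)) := mul_assoc _ _ _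
  have hshift : ∀ k, ∑ j ∈ range J, ‖u (j + 1) k‖ ^ (2 * (p - 1)) =
      ∑ j ∈ range J, ‖u j k‖ ^ (2 * (p - 1)) := fun k ↦ by
    have := (sum_range_succ' (fun j ↦ ‖u j k‖ ^ (2 * (p - 1))) J).symm.trans
      (sum_range_succ _ J)
    rwa [h0, hJ, add_left_inj] at this
  have ha : ∑ q ∈ s, a q ^ 2 ≤ 4 * M :=
    calc ∑ q ∈ s, a q ^ 2
        ≤ ∑ q ∈ s, (2 * ‖u (q.1 + 1) q.2‖ ^ (2 * (p - 1)) + 2 * ‖u q.1 q.2‖ ^ (2 * (p - 1))) := by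
          refine sum_le_sum fun q _ ↦ ?_
          simp only [a, pow_mul']
          exact (add_sq_le).trans_eq (mul_add _ _ _)
      _ = 4 * M := by
          simp only [s, sum_product, sum_add_distrib, ← mul_sum]
          rw [sum_comm, sum_congr rfl fun k _ ↦ hshift k, sum_comm]
          ring
  have hg : ∑ q ∈ s, g q ^ 2 = D := sum_product _ _ _
  calc (∑ j ∈ range J, ∑ k ∈ range K, |‖u (j + 1) k‖ ^ p - ‖u j k‖ ^ p|) ^ 2
      ≤ (p / 2 * ∑ q ∈ s, a q * g q) ^ 2 := pow_le_pow_left₀ (by positivity) hdiff 2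
    _ = p ^ 2 / 4 * (∑ q ∈ s, a q * g q) ^ 2 := by ring
    _ ≤ p ^ 2 / 4 * ((∑ q ∈ s, a q ^ 2) * ∑ q ∈ s, g q ^ 2) := by
        gcongr; exact sum_mul_sq_le_sq_mul_sq _ _ _
    _ ≤ p ^ 2 / 4 * (4 * M * D) := by rw [hg]; gcongr
    _ = p ^ 2 * M * D := by ring

lemma two_mul_mul_le_sq_mul_div_add_div {δx δy T A B : ℝ} (hT : T ^ 2 ≤ A * B) (hA : 0 ≤ A)
    (hB : 0 ≤ B) : 2 * (δx * δy * T) ≤ (δx * δy) ^ 2 * (A / δx ^ 2 + B / δy ^ 2) := by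
  rcases eq_or_ne δx 0 with rfl | hx
  · simp
  rcases eq_or_ne δy 0 with rfl | hy
  · simp
  have hsplit : (δx * δy) ^ 2 * (A / δx ^ 2 + B / δy ^ 2) = δy ^ 2 * A + δx ^ 2 * B := by
    field_simp
  rw [hsplit]
  refine (le_abs_self _).trans (abs_le_of_sq_le_sq ?_ (by positivity))
  nlinarith [sq_nonneg (δy ^ 2 * A - δx ^ 2 * B),
    mul_le_mul_of_nonneg_left hT (by positivity : 0 ≤ δx ^ 2 * δy ^ 2)]

lemma gradSq_eq (Δx Δy : ℝ) (J K : ℕ) (u : ℕ → ℕ → ℂ) :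
    gradSq Δx Δy J K u = Δx * Δy *
      ((∑ j ∈ range J, ∑ k ∈ range K, ‖u (j + 1) k - u j k‖ ^ 2) / Δx ^ 2 +
        (∑ j ∈ range J, ∑ k ∈ range K, ‖u j (k + 1) - u j k‖ ^ 2) / Δy ^ 2) := by
  simp only [gradSq, norm_div, Complex.norm_real, Real.norm_eq_abs, div_pow, sq_abs,
    sum_add_distrib, sum_div]

theorem stmt0_general (J K : ℕ) (Δx Δy : ℝ) (u : ℕ → ℕ → ℂ) (hu : memX J K u) (p : ℕ) (hp : 0 < p) :
    normP Δx Δy J K (2 * p) u ≤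
      (p : ℝ) ^ 2 / 8 * normP Δx Δy J K (2 * (p - 1)) u * gradSq Δx Δy J K u := by
  obtain ⟨h0k, hJk, hj0, hjK⟩ := hu
  have hF := four_mul_sum_sq_le_mul (f := fun j k ↦ ‖u j k‖ ^ p) (J := J) (K := K)
    (by simp [h0k, hp.ne']) (by simp [hJk, hp.ne'])
    (by simp [hj0, hp.ne']) (by simp [hjK, hp.ne'])
  have hX := sq_sum_abs_sub_norm_pow_le h0k hJk K p
  have hY := sq_sum_abs_sub_norm_pow_le (u := fun k j ↦ u j k) hj0 hjK J p
  simp only [sum_comm (s := range K) (t := range J)] at hY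
  rw [gradSq_eq, normP, normP]
  simp only [← pow_mul, mul_comm p 2] at hF
  set M := ∑ j ∈ range J, ∑ k ∈ range K, ‖u j k‖ ^ (2 * (p - 1))
  set Dx := ∑ j ∈ range J, ∑ k ∈ range K, ‖u (j + 1) k - u j k‖ ^ 2
  set Dy := ∑ j ∈ range J, ∑ k ∈ range K, ‖u j (k + 1) - u j k‖ ^ 2
  have hT : (4 * ∑ j ∈ range J, ∑ k ∈ range K, ‖u j k‖ ^ (2 * p)) ^ 2 ≤
      (p ^ 2 * M * Dx) * (p ^ 2 * M * Dy) := by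
    refine (pow_le_pow_left₀ (by positivity) hF 2).trans ?_
    rw [mul_pow]
    exact mul_le_mul hX hY (sq_nonneg _) (by positivity)
  have hAMGM := two_mul_mul_le_sq_mul_div_add_div (δx := Δx) (δy := Δy) hT (by positivity)
    (by positivity)
  linear_combination hAMGM / 8

/-- For `u ∈ X_JK` and positive integer `p`,
`‖u‖_{2p,h}^{2p} ≤ (p²/8)·‖u‖_{2(p−1),h}^{2(p−1)}·‖δ⁺u‖²_{2,h}`. -/
theorem stmt0 (J K : ℕ) (hJ : 2 ≤ J) (hK : 2 ≤ K) (a b c d : ℝ) (hab : a < b) (hcd : c < d)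
    (Δx Δy : ℝ) (hΔx : Δx = (b - a) / J) (hΔy : Δy = (d - c) / K)
    (u : ℕ → ℕ → ℂ) (hu : memX J K u) (p : ℕ) (hp : 0 < p) :
    normP Δx Δy J K (2 * p) u ≤
      (p : ℝ) ^ 2 / 8 * normP Δx Δy J K (2 * (p - 1)) u * gradSq Δx Δy J K u :=
  stmt0_general J K Δx Δy u hu p hp
end
end

section
/- For every u ∈ X_JK one has the discrete Gagliardo–Nirenberg-type inequality ‖u‖⁴_{4,h} ≤ (1/2) · ‖u‖²_{2,h} · ‖δ⁺u‖²_{2,h}. -/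
noncomputable section

open Finset Complex ComplexConjugate

/-! A discrete Ladyzhenskaya inequality. Since `u` vanishes at both ends of every row and column,
telescoping `‖u j k‖²` from either end bounds `2‖u j k‖²` both by a bound `A k` for the variation of
`‖u · k‖²` and by a bound `B j` for the variation of `‖u j ·‖²`. Multiplying gives
`4 ∑ ‖u‖⁴ ≤ (∑ A)(∑ B)`, and Cauchy–Schwarz bounds `(∑ A)²` and `(∑ B)²` by `4 ∑ ‖u‖²` times the
sums of squared `x`- and `y`-differences. AM-GM then turns the geometric mean of these two sums
into the mesh-weighted sum `‖δ⁺u‖²`. -/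

section OneDim

variable {E : Type*} [SeminormedAddCommGroup E]

lemma two_mul_le_sum_abs_sub_of_eq_zero {f : ℕ → ℝ} {n j : ℕ} (h0 : f 0 = 0) (hn : f n = 0)
    (hj : j ≤ n) : 2 * f j ≤ ∑ i ∈ range n, |f (i + 1) - f i| := by
  have hleft : f j = ∑ i ∈ range j, (f (i + 1) - f i) := by
    rw [sum_range_sub, h0, sub_zero]
  have hright : f j = ∑ i ∈ Ico j n, -(f (i + 1) - f i) := by
    have := sum_range_add_sum_Ico (fun i => f (i + 1) - f i) hj
    rw [sum_range_sub, sum_range_sub, hn, h0] at this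
    rw [sum_neg_distrib]
    linarith
  calc 2 * f j = ∑ i ∈ range j, (f (i + 1) - f i) + ∑ i ∈ Ico j n, -(f (i + 1) - f i) := by
        rw [← hleft, ← hright, two_mul]
    _ ≤ ∑ i ∈ range j, |f (i + 1) - f i| + ∑ i ∈ Ico j n, |f (i + 1) - f i| := by
        gcongr with i _ i _
        · exact le_abs_self _
        · exact neg_le_abs _
    _ = ∑ i ∈ range n, |f (i + 1) - f i| := sum_range_add_sum_Ico _ hj

lemma abs_norm_sq_sub_norm_sq_le (z w : E) :
    |‖z‖ ^ 2 - ‖w‖ ^ 2| ≤ (‖z‖ + ‖w‖) * ‖z - w‖ := by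
  rw [sq_sub_sq, abs_mul, abs_of_nonneg (by positivity : 0 ≤ ‖z‖ + ‖w‖)]
  exact mul_le_mul_of_nonneg_left (abs_norm_sub_norm_le z w) (by positivity)

/-- Bounds the total variation of `i ↦ ‖w i‖ ^ 2` on `[0, n]`. -/
def variationBound (n : ℕ) (w : ℕ → E) : ℝ :=
  ∑ i ∈ range n, (‖w (i + 1)‖ + ‖w i‖) * ‖w (i + 1) - w i‖

lemma variationBound_nonneg (n : ℕ) (w : ℕ → E) : 0 ≤ variationBound n w :=
  sum_nonneg fun _ _ => by positivity

lemma two_mul_norm_sq_le_variationBound {w : ℕ → E} {n j : ℕ} (h0 : w 0 = 0) (hn : w n = 0)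
    (hj : j ≤ n) : 2 * ‖w j‖ ^ 2 ≤ variationBound n w :=
  (two_mul_le_sum_abs_sub_of_eq_zero (f := fun i => ‖w i‖ ^ 2) (by simp [h0]) (by simp [hn])
    hj).trans (sum_le_sum fun i _ => abs_norm_sq_sub_norm_sq_le _ _)

lemma sum_add_norm_sq_le {w : ℕ → E} {n : ℕ} (hn : w n = 0) :
    ∑ i ∈ range n, (‖w (i + 1)‖ + ‖w i‖) ^ 2 ≤ 4 * ∑ i ∈ range n, ‖w i‖ ^ 2 := by
  have hshift : ∑ i ∈ range n, ‖w (i + 1)‖ ^ 2 ≤ ∑ i ∈ range n, ‖w i‖ ^ 2 := by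
    have h := (sum_range_succ' (fun i => ‖w i‖ ^ 2) n).symm.trans
      (sum_range_succ (fun i => ‖w i‖ ^ 2) n)
    simp only [hn, norm_zero] at h
    nlinarith [norm_nonneg (w 0)]
  calc ∑ i ∈ range n, (‖w (i + 1)‖ + ‖w i‖) ^ 2
      ≤ ∑ i ∈ range n, (2 * ‖w (i + 1)‖ ^ 2 + 2 * ‖w i‖ ^ 2) :=
        sum_le_sum fun i _ => by nlinarith [sq_nonneg (‖w (i + 1)‖ - ‖w i‖)]
    _ ≤ 4 * ∑ i ∈ range n, ‖w i‖ ^ 2 := by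
        rw [sum_add_distrib, ← mul_sum, ← mul_sum]
        linarith

lemma sum_variationBound_sq_le {ι : Type*} (s : Finset ι) (w : ι → ℕ → E) {n : ℕ}
    (hn : ∀ i ∈ s, w i n = 0) :
    (∑ i ∈ s, variationBound n (w i)) ^ 2 ≤
      4 * (∑ i ∈ s, ∑ m ∈ range n, ‖w i m‖ ^ 2) *
        ∑ i ∈ s, ∑ m ∈ range n, ‖w i (m + 1) - w i m‖ ^ 2 := by
  have hcs := sum_mul_sq_le_sq_mul_sq (s ×ˢ range n)
    (fun p => ‖w p.1 (p.2 + 1)‖ + ‖w p.1 p.2‖) (fun p => ‖w p.1 (p.2 + 1) - w p.1 p.2‖)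
  simp only [sum_product] at hcs
  refine hcs.trans (mul_le_mul_of_nonneg_right ?_ (by positivity))
  rw [mul_sum]
  exact sum_le_sum fun i hi => sum_add_norm_sq_le (hn i hi)

end OneDim

theorem sum_norm_pow_four_sq_le {J K : ℕ} {u : ℕ → ℕ → ℂ} (hu : memX J K u) :
    (∑ j ∈ range J, ∑ k ∈ range K, ‖u j k‖ ^ 4) ^ 2 ≤
      (∑ j ∈ range J, ∑ k ∈ range K, ‖u j k‖ ^ 2) ^ 2 *
        ((∑ j ∈ range J, ∑ k ∈ range K, ‖u (j + 1) k - u j k‖ ^ 2) *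
          ∑ j ∈ range J, ∑ k ∈ range K, ‖u j (k + 1) - u j k‖ ^ 2) := by
  obtain ⟨h0x, hJx, h0y, hKy⟩ := hu
  set P := ∑ j ∈ range J, ∑ k ∈ range K, ‖u j k‖ ^ 4
  set S := ∑ j ∈ range J, ∑ k ∈ range K, ‖u j k‖ ^ 2
  set Dx := ∑ j ∈ range J, ∑ k ∈ range K, ‖u (j + 1) k - u j k‖ ^ 2
  set Dy := ∑ j ∈ range J, ∑ k ∈ range K, ‖u j (k + 1) - u j k‖ ^ 2
  set Tx := ∑ k ∈ range K, variationBound J (fun j => u j k)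
  set Ty := ∑ j ∈ range J, variationBound K (u j)
  have hTx : Tx ^ 2 ≤ 4 * S * Dx := by
    have h := sum_variationBound_sq_le (range K) (fun k j => u j k) (n := J) fun k _ => hJx k
    rwa [sum_comm, sum_comm (s := range K)] at h
  have hTy : Ty ^ 2 ≤ 4 * S * Dy := sum_variationBound_sq_le (range J) u fun j _ => hKy j
  have hP : 4 * P ≤ Ty * Tx := by
    rw [sum_mul_sum]
    simp only [P, mul_sum]
    refine sum_le_sum fun j hj => sum_le_sum fun k hk => ?_
    calc 4 * ‖u j k‖ ^ 4 = (2 * ‖u j k‖ ^ 2) * (2 * ‖u j k‖ ^ 2) := by ring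
      _ ≤ variationBound K (u j) * variationBound J (fun j => u j k) :=
        mul_le_mul (two_mul_norm_sq_le_variationBound (h0y j) (hKy j) (mem_range.1 hk).le)
          (two_mul_norm_sq_le_variationBound (w := fun j => u j k) (h0x k) (hJx k)
            (mem_range.1 hj).le)
          (by positivity) (variationBound_nonneg _ _)
  have : 16 * P ^ 2 ≤ 16 * (S ^ 2 * (Dx * Dy)) :=
    calc 16 * P ^ 2 = (4 * P) ^ 2 := by ring
      _ ≤ (Ty * Tx) ^ 2 := pow_le_pow_left₀ (by positivity) hP 2
      _ = Ty ^ 2 * Tx ^ 2 := by ring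
      _ ≤ (4 * S * Dy) * (4 * S * Dx) := mul_le_mul hTy hTx (sq_nonneg _) (by positivity)
      _ = 16 * (S ^ 2 * (Dx * Dy)) := by ring
  linarith

lemma mul_le_half_mul_mul_of_sq_le {P S X Y : ℝ} (hP : 0 ≤ P) (hS : 0 ≤ S) (hX : 0 ≤ X)
    (hY : 0 ≤ Y) (h : P ^ 2 ≤ S ^ 2 * (X * Y)) (Δx Δy : ℝ) :
    Δx * Δy * P ≤ 1 / 2 * (Δx * Δy * S) * (Δx * Δy * (X / Δx ^ 2 + Y / Δy ^ 2)) := by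
  rcases le_or_gt (Δx * Δy) 0 with hs | hs
  · nlinarith [mul_nonpos_of_nonpos_of_nonneg hs hP,
      mul_nonneg (mul_nonneg (sq_nonneg (Δx * Δy)) hS)
        (add_nonneg (div_nonneg hX (sq_nonneg Δx)) (div_nonneg hY (sq_nonneg Δy)))]
  · have hx : Δx ≠ 0 := by rintro rfl; simp at hs
    have hy : Δy ≠ 0 := by rintro rfl; simp at hs
    set α := Δx * Δy / Δx ^ 2 * X
    set β := Δx * Δy / Δy ^ 2 * Y
    have hα : 0 ≤ α := by positivity
    have hβ : 0 ≤ β := by positivity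
    have hαβ : α * β = X * Y := by simp only [α, β]; field_simp
    have hamgm : 2 * P ≤ S * (α + β) := by
      nlinarith [sq_nonneg (S * α - S * β), mul_nonneg hS (add_nonneg hα hβ)]
    have hrhs : 1 / 2 * (Δx * Δy * S) * (Δx * Δy * (X / Δx ^ 2 + Y / Δy ^ 2)) =
        Δx * Δy * (S * (α + β) / 2) := by simp only [α, β]; ring
    rw [hrhs]
    exact mul_le_mul_of_nonneg_left (by linarith) hs.le

theorem stmt1_general (J K : ℕ) (Δx Δy : ℝ) (u : ℕ → ℕ → ℂ) (hu : memX J K u) :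
    normP Δx Δy J K 4 u ≤ 1 / 2 * normP Δx Δy J K 2 u * gradSq Δx Δy J K u := by
  rw [normP, normP, gradSq_eq]
  exact mul_le_half_mul_mul_of_sq_le (by positivity) (by positivity) (by positivity)
    (by positivity) (sum_norm_pow_four_sq_le hu) Δx Δy

/-- For `u ∈ X_JK`, `‖u‖⁴_{4,h} ≤ (1/2)·‖u‖²_{2,h}·‖δ⁺u‖²_{2,h}`. -/
theorem stmt1 (J K : ℕ) (hJ : 2 ≤ J) (hK : 2 ≤ K) (a b c d : ℝ) (hab : a < b) (hcd : c < d)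
    (Δx Δy : ℝ) (hΔx : Δx = (b - a) / J) (hΔy : Δy = (d - c) / K)
    (u : ℕ → ℕ → ℂ) (hu : memX J K u) :
    normP Δx Δy J K 4 u ≤ 1 / 2 * normP Δx Δy J K 2 u * gradSq Δx Δy J K u :=
  stmt1_general J K Δx Δy u hu
end
end

section
/- Let u ∈ X_JK, let p be a positive integer, and let (j,k) be any index with 0 ≤ j ≤ J, 0 ≤ k ≤ K. Then |u_{j,k}|^p ≤ (p/2) · Δx · ( Σ_{l=0}^{J−1} |δ⁺_x u_{l,k}|² )^{1/2} · ( Σ_{l=0}^{J−1} |u_{l,k}|^{2(p−1)} )^{1/2}. -/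
noncomputable section

open Finset Complex ComplexConjugate

/-!
Along the row `k` put `f l = |u_{l,k}|`. The sequence `f l ^ p` vanishes at `l = 0` and `l = J`,
so twice its value at `j` is at most its total variation `∑ |f (l+1) ^ p - f l ^ p|`.
Pairing the terms `a ^ i b ^ (p-1-i)` and `a ^ (p-1-i) b ^ i` of the geometric sum gives
`|a ^ p - b ^ p| ≤ (p/2) |a - b| (a ^ (p-1) + b ^ (p-1))`, and
`|f (l+1) - f l| ≤ Δx |δ⁺_x u_{l,k}|`. Cauchy–Schwarz on the two resulting sums (one of them
shifted by an index, which costs nothing because `f 0 = f J`) gives the bound.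
-/

lemma pow_mul_pow_add_pow_mul_pow_le_s3 {a b : ℝ} (ha : 0 ≤ a) (hb : 0 ≤ b) (m n : ℕ) :
    a ^ m * b ^ n + a ^ n * b ^ m ≤ a ^ (m + n) + b ^ (m + n) := by
  have key : 0 ≤ (a ^ m - b ^ m) * (a ^ n - b ^ n) := by
    rcases le_total b a with h | h
    · exact mul_nonneg (sub_nonneg.2 (pow_le_pow_left₀ hb h m))
        (sub_nonneg.2 (pow_le_pow_left₀ hb h n))
    · exact mul_nonneg_of_nonpos_of_nonpos (sub_nonpos.2 (pow_le_pow_left₀ ha h m))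
        (sub_nonpos.2 (pow_le_pow_left₀ ha h n))
  rw [pow_add, pow_add]
  linarith

lemma two_mul_geom_sum₂_le {a b : ℝ} (ha : 0 ≤ a) (hb : 0 ≤ b) (n : ℕ) :
    2 * ∑ i ∈ range n, a ^ i * b ^ (n - 1 - i) ≤ n * (a ^ (n - 1) + b ^ (n - 1)) := by
  have reflect : ∑ i ∈ range n, a ^ i * b ^ (n - 1 - i) =
      ∑ i ∈ range n, a ^ (n - 1 - i) * b ^ i := by
    rw [← sum_range_reflect]
    refine sum_congr rfl fun i hi => ?_
    rw [Nat.sub_sub_self (by rw [mem_range] at hi; omega)]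
  calc 2 * ∑ i ∈ range n, a ^ i * b ^ (n - 1 - i)
      = ∑ i ∈ range n, (a ^ i * b ^ (n - 1 - i) + a ^ (n - 1 - i) * b ^ i) := by
        rw [sum_add_distrib, ← reflect, two_mul]
    _ ≤ ∑ _i ∈ range n, (a ^ (n - 1) + b ^ (n - 1)) := by
        refine sum_le_sum fun i hi => ?_
        have := pow_mul_pow_add_pow_mul_pow_le_s3 ha hb i (n - 1 - i)
        rwa [Nat.add_sub_cancel' (by rw [mem_range] at hi; omega)] at this
    _ = n * (a ^ (n - 1) + b ^ (n - 1)) := by simp [mul_add]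

lemma abs_pow_sub_pow_le_half_mul {a b : ℝ} (ha : 0 ≤ a) (hb : 0 ≤ b) (n : ℕ) :
    |a ^ n - b ^ n| ≤ n / 2 * |a - b| * (a ^ (n - 1) + b ^ (n - 1)) := by
  have hsum : 0 ≤ ∑ i ∈ range n, a ^ i * b ^ (n - 1 - i) :=
    sum_nonneg fun _ _ => by positivity
  rw [← geom_sum₂_mul, abs_mul, abs_of_nonneg hsum]
  calc (∑ i ∈ range n, a ^ i * b ^ (n - 1 - i)) * |a - b|
      ≤ (n / 2 * (a ^ (n - 1) + b ^ (n - 1))) * |a - b| := by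
        gcongr
        linarith [two_mul_geom_sum₂_le ha hb n]
    _ = n / 2 * |a - b| * (a ^ (n - 1) + b ^ (n - 1)) := by ring

lemma two_mul_le_sum_abs_sub {g : ℕ → ℝ} {J j : ℕ} (h0 : g 0 = 0) (hJ : g J = 0)
    (hj : j ≤ J) :
    2 * g j ≤ ∑ l ∈ range J, |g (l + 1) - g l| := by
  have left : g j ≤ ∑ l ∈ range j, |g (l + 1) - g l| :=
    calc g j = ∑ l ∈ range j, (g (l + 1) - g l) := by rw [sum_range_sub, h0, sub_zero]
      _ ≤ _ := sum_le_sum fun _ _ => le_abs_self _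
  have right : g j ≤ ∑ l ∈ Ico j J, |g (l + 1) - g l| :=
    calc g j = ∑ l ∈ Ico j J, -(g (l + 1) - g l) := by
          rw [sum_neg_distrib, sum_Ico_sub g hj, hJ]; ring
      _ ≤ _ := sum_le_sum fun _ _ => neg_le_abs _
  rw [← sum_range_add_sum_Ico _ hj]
  linarith

theorem norm_pow_le_sqrt_sum_sq_mul_sqrt_sum_pow {E : Type*} [SeminormedAddCommGroup E]
    {v : ℕ → E} {J j p : ℕ} (h0 : v 0 = 0) (hJ : v J = 0) (hj : j ≤ J) (hp : 0 < p) :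
    ‖v j‖ ^ p ≤ p / 2 * √(∑ l ∈ range J, ‖v (l + 1) - v l‖ ^ 2) *
      √(∑ l ∈ range J, ‖v l‖ ^ (2 * (p - 1))) := by
  set e : ℕ → ℝ := fun l => ‖v (l + 1) - v l‖
  set f : ℕ → ℝ := fun l => ‖v l‖
  set A := ∑ l ∈ range J, e l ^ 2
  set B := ∑ l ∈ range J, f l ^ (2 * (p - 1))
  have hsq : ∀ x : ℝ, (x ^ (p - 1)) ^ 2 = x ^ (2 * (p - 1)) := fun x => by
    rw [← pow_mul, mul_comm]
  have shift :
      ∑ l ∈ range J, (f (l + 1) ^ (p - 1)) ^ 2 = ∑ l ∈ range J, (f l ^ (p - 1)) ^ 2 := by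
    have ends : (f J ^ (p - 1)) ^ 2 = (f 0 ^ (p - 1)) ^ 2 := by simp only [f, h0, hJ]
    rw [← sub_eq_zero, ← sum_sub_distrib, sum_range_sub (fun l => (f l ^ (p - 1)) ^ 2), ends,
      sub_self]
  have cs₀ : ∑ l ∈ range J, e l * f l ^ (p - 1) ≤ √A * √B := by
    simpa only [hsq] using Real.sum_mul_le_sqrt_mul_sqrt (range J) e (fun l => f l ^ (p - 1))
  have cs₁ : ∑ l ∈ range J, e l * f (l + 1) ^ (p - 1) ≤ √A * √B := by
    have cs := Real.sum_mul_le_sqrt_mul_sqrt (range J) e (fun l => f (l + 1) ^ (p - 1))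
    rw [shift] at cs
    simpa only [hsq] using cs
  have telescope : 2 * f j ^ p ≤ ∑ l ∈ range J, |f (l + 1) ^ p - f l ^ p| :=
    two_mul_le_sum_abs_sub (g := fun l => f l ^ p) (by simp [f, h0, hp.ne'])
      (by simp [f, hJ, hp.ne']) hj
  have increment : ∀ l, |f (l + 1) ^ p - f l ^ p| ≤
      p / 2 * (e l * f (l + 1) ^ (p - 1) + e l * f l ^ (p - 1)) := fun l =>
    calc |f (l + 1) ^ p - f l ^ p|
        ≤ p / 2 * |f (l + 1) - f l| * (f (l + 1) ^ (p - 1) + f l ^ (p - 1)) :=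
          abs_pow_sub_pow_le_half_mul (norm_nonneg _) (norm_nonneg _) p
      _ ≤ p / 2 * e l * (f (l + 1) ^ (p - 1) + f l ^ (p - 1)) := by
          gcongr
          exact abs_norm_sub_norm_le _ _
      _ = _ := by ring
  calc f j ^ p ≤ 2⁻¹ * ∑ l ∈ range J, |f (l + 1) ^ p - f l ^ p| := by linarith
    _ ≤ 2⁻¹ * ∑ l ∈ range J, p / 2 * (e l * f (l + 1) ^ (p - 1) + e l * f l ^ (p - 1)) :=
        mul_le_mul_of_nonneg_left (sum_le_sum fun l _ => increment l) (by norm_num)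
    _ = p / 4 * (∑ l ∈ range J, e l * f (l + 1) ^ (p - 1) +
          ∑ l ∈ range J, e l * f l ^ (p - 1)) := by
        rw [← mul_sum, sum_add_distrib]; ring
    _ ≤ p / 4 * (√A * √B + √A * √B) := by gcongr
    _ = p / 2 * √A * √B := by ring

theorem stmt3_general (J K : ℕ) (hJ : 2 ≤ J) (a b : ℝ) (hab : a < b)
    (Δx : ℝ) (hΔx : Δx = (b - a) / J)
    (u : ℕ → ℕ → ℂ) (hu : memX J K u) (p : ℕ) (hp : 0 < p)
    (j k : ℕ) (hj : j ≤ J) :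
    ‖u j k‖ ^ p ≤
      (p : ℝ) / 2 * Δx *
        Real.sqrt (∑ l ∈ Finset.range J, ‖(u (l + 1) k - u l k) / (Δx : ℂ)‖ ^ 2) *
        Real.sqrt (∑ l ∈ Finset.range J, ‖u l k‖ ^ (2 * (p - 1))) := by
  have hΔx_pos : 0 < Δx := by
    rw [hΔx]
    exact div_pos (sub_pos.2 hab) (Nat.cast_pos.2 (by omega))
  have rescale : Δx * √(∑ l ∈ range J, ‖(u (l + 1) k - u l k) / (Δx : ℂ)‖ ^ 2) =
      √(∑ l ∈ range J, ‖u (l + 1) k - u l k‖ ^ 2) := by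
    simp_rw [norm_div, Complex.norm_real, Real.norm_of_nonneg hΔx_pos.le, div_pow, ← sum_div,
      Real.sqrt_div' _ (sq_nonneg Δx), Real.sqrt_sq hΔx_pos.le]
    field_simp
  calc ‖u j k‖ ^ p
      ≤ p / 2 * √(∑ l ∈ range J, ‖u (l + 1) k - u l k‖ ^ 2) *
          √(∑ l ∈ range J, ‖u l k‖ ^ (2 * (p - 1))) :=
        norm_pow_le_sqrt_sum_sq_mul_sqrt_sum_pow (v := fun l => u l k) (hu.1 k) (hu.2.1 k) hj hp
    _ = _ := by rw [← rescale]; ring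

/-- pointwise bound
`|u_{j,k}|^p ≤ (p/2)·Δx·(Σ_{l<J} |δ⁺_x u_{l,k}|²)^{1/2}·(Σ_{l<J} |u_{l,k}|^{2(p−1)})^{1/2}`. -/
theorem stmt3 (J K : ℕ) (hJ : 2 ≤ J) (hK : 2 ≤ K) (a b c d : ℝ) (hab : a < b) (hcd : c < d)
    (Δx Δy : ℝ) (hΔx : Δx = (b - a) / J) (hΔy : Δy = (d - c) / K)
    (u : ℕ → ℕ → ℂ) (hu : memX J K u) (p : ℕ) (hp : 0 < p)
    (j k : ℕ) (hj : j ≤ J) (hk : k ≤ K) :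
    ‖u j k‖ ^ p ≤
      (p : ℝ) / 2 * Δx *
        Real.sqrt (∑ l ∈ Finset.range J, ‖(u (l + 1) k - u l k) / (Δx : ℂ)‖ ^ 2) *
        Real.sqrt (∑ l ∈ Finset.range J, ‖u l k‖ ^ (2 * (p - 1))) :=
  stmt3_general J K hJ a b hab Δx hΔx u hu p hp j k hj
end
end

section
/- Let {Uⁿ}_{n=0}^N be a CNFD solution. Then for every 1 ≤ m ≤ N one has the exact discrete mass balance identity (‖Uᵐ‖²_{2,h} − ‖U⁰‖²_{2,h})/(2τ) + ε Σ_{n=0}^{m−1} ‖U^{n+1/2}‖⁴_{4,h} = 0, where U^{n+1/2} = (U^{n+1} + Uⁿ)/2. -/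
/-!
Pair the scheme at each grid point with the conjugate of `U^{n+1/2}` and take imaginary parts.
The time difference gives `(|U^{n+1}|² - |Uⁿ|²)/(2τ)`; `ψ₁` and `ψ₂` are real multiples of
`U^{n+1/2}`, so their pairings are real; the damping term `iεφ` contributes `ε|U^{n+1/2}|⁴`.
Summed over the grid, the pairing of `δ²U^{n+1/2}` with `U^{n+1/2}` is real by summation by parts,
since the array vanishes on the boundary. This gives the one-step balance, which telescopes in `n`.
-/

noncomputable section

open Finset Complex ComplexConjugate

lemma im_ofReal_mul_mul_conj (r : ℝ) (z : ℂ) : ((r : ℂ) * z * conj z).im = 0 := by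
  rw [mul_assoc, mul_conj, ← ofReal_mul, ofReal_im]

lemma im_I_mul_sub_div_mul_conj_midpoint (τ : ℝ) (W V : ℂ) :
    (I * (W - V) / τ * conj ((W + V) / 2)).im = (‖W‖ ^ 2 - ‖V‖ ^ 2) / (2 * τ) := by
  simp only [Complex.sq_norm, normSq_apply, mul_im, mul_re, div_ofReal_im, div_ofReal_re, sub_re,
    sub_im, add_re, add_im, I_re, I_im, conj_re, conj_im, div_ofNat_re, div_ofNat_im]
  field_simp
  ring

lemma im_sum_secondDiff_mul_conj (L : ℕ) (v : ℕ → ℂ) (h0 : v 0 = 0) (hL : v L = 0) :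
    (∑ j ∈ range L, (v (j + 1) - 2 * v j + v (j - 1)) * conj (v j)).im = 0 := by
  have backward : ∑ j ∈ range L, v (j - 1) * conj (v j) =
      conj (∑ j ∈ range L, v (j + 1) * conj (v j)) := by
    rcases L with _ | M
    · simp
    rw [map_sum, sum_range_succ', sum_range_succ]
    simp only [h0, hL, Nat.add_sub_cancel, map_mul, conj_conj, map_zero, mul_zero, zero_mul,
      add_zero]
    exact sum_congr rfl fun i _ => mul_comm _ _
  have split : ∑ j ∈ range L, (v (j + 1) - 2 * v j + v (j - 1)) * conj (v j) =
      ∑ j ∈ range L, v (j + 1) * conj (v j) + ∑ j ∈ range L, v (j - 1) * conj (v j) -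
        ∑ j ∈ range L, ((2 * normSq (v j) : ℝ) : ℂ) := by
    simp only [← sum_add_distrib, ← sum_sub_distrib, ofReal_mul, ← mul_conj]
    refine sum_congr rfl fun j _ => ?_
    push_cast
    ring
  rw [split, backward, sub_im, add_im, conj_im, ← ofReal_sum, ofReal_im]
  ring

lemma im_sum_delta2_mul_conj (Δx Δy : ℝ) (J K : ℕ) (u : ℕ → ℕ → ℂ) (hu : memX J K u) :
    (∑ j ∈ range J, ∑ k ∈ range K, delta2 Δx Δy u j k * conj (u j k)).im = 0 := by
  obtain ⟨h0, hJ, hk0, hK⟩ := hu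
  have split : ∑ j ∈ range J, ∑ k ∈ range K, delta2 Δx Δy u j k * conj (u j k) =
      (∑ k ∈ range K, ∑ j ∈ range J, (u (j + 1) k - 2 * u j k + u (j - 1) k) * conj (u j k))
          / ((Δx ^ 2 : ℝ) : ℂ) +
        (∑ j ∈ range J, ∑ k ∈ range K, (u j (k + 1) - 2 * u j k + u j (k - 1)) * conj (u j k))
          / ((Δy ^ 2 : ℝ) : ℂ) := by
    rw [sum_comm (s := range K), sum_div, sum_div, ← sum_add_distrib]
    refine sum_congr rfl fun j _ => ?_
    rw [sum_div, sum_div, ← sum_add_distrib]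
    refine sum_congr rfl fun k _ => ?_
    simp only [delta2]
    push_cast
    ring
  rw [split, add_im, div_ofReal_im, div_ofReal_im, im_sum, im_sum,
    sum_eq_zero fun k _ => im_sum_secondDiff_mul_conj J (u · k) (h0 k) (hJ k),
    sum_eq_zero fun j _ => im_sum_secondDiff_mul_conj K (u j) (hk0 j) (hK j)]
  simp

lemma mass_balance_pointwise (lam ν ε τ : ℝ) (W V L : ℂ)
    (h : I * (W - V) / τ + L + lam * psi1 W V - ν * psi2 W V + I * ε * phi W V = 0) :
    (‖W‖ ^ 2 - ‖V‖ ^ 2) / (2 * τ) + ε * ‖(W + V) / 2‖ ^ 4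
      + (L * conj ((W + V) / 2)).im = 0 := by
  have paired := congrArg (fun w => (w * conj ((W + V) / 2)).im) h
  have h1 : ((lam : ℂ) * psi1 W V * conj ((W + V) / 2)).im = 0 := by
    rw [psi1, ← mul_assoc, ← ofReal_mul, im_ofReal_mul_mul_conj]
  have h2 : ((ν : ℂ) * psi2 W V * conj ((W + V) / 2)).im = 0 := by
    rw [psi2, ← mul_assoc, ← ofReal_mul, im_ofReal_mul_mul_conj]
  have h3 : (I * ε * phi W V * conj ((W + V) / 2)).im = ε * ‖(W + V) / 2‖ ^ 4 := by
    rw [phi, mul_assoc, mul_assoc, mul_assoc, mul_conj, ← ofReal_mul, ← ofReal_mul,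
      I_mul_im, ofReal_re, normSq_eq_norm_sq]
    ring
  simp only [add_mul, sub_mul, add_im, sub_im, zero_mul, zero_im, h1, h2, h3,
    im_I_mul_sub_div_mul_conj_midpoint] at paired
  linarith

lemma memX_midpoint {J K : ℕ} {W V : ℕ → ℕ → ℂ} (hW : memX J K W) (hV : memX J K V) :
    memX J K (fun j k => (W j k + V j k) / 2) := by
  obtain ⟨hW0, hWJ, hW0', hWK⟩ := hW
  obtain ⟨hV0, hVJ, hV0', hVK⟩ := hV
  refine ⟨fun k => ?_, fun k => ?_, fun j => ?_, fun j => ?_⟩ <;> simp [*]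

lemma mass_balance_step (Δx Δy : ℝ) (J K : ℕ) (lam ν ε τ : ℝ) (W V : ℕ → ℕ → ℂ)
    (hW : memX J K W) (hV : memX J K V) (hstep : stepEq Δx Δy J K lam ν ε τ W V) :
    (normP Δx Δy J K 2 W - normP Δx Δy J K 2 V) / (2 * τ) +
      ε * normP Δx Δy J K 4 (fun j k => (W j k + V j k) / 2) = 0 := by
  set u : ℕ → ℕ → ℂ := fun j k => (W j k + V j k) / 2
  have pointwise : ∀ j ∈ range J, ∀ k ∈ range K,
      (‖W j k‖ ^ 2 - ‖V j k‖ ^ 2) / (2 * τ) + ε * ‖u j k‖ ^ 4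
        + (delta2 Δx Δy u j k * conj (u j k)).im = 0 := by
    intro j hj k hk
    rw [mem_range] at hj hk
    -- the scheme is not imposed on the rows `j = 0` and `k = 0`, but there `W = V = 0`
    rcases Nat.eq_zero_or_pos j with rfl | hj1
    · simp [u, hW.1, hV.1]
    rcases Nat.eq_zero_or_pos k with rfl | hk1
    · simp [u, hW.2.2.1, hV.2.2.1]
    exact mass_balance_pointwise lam ν ε τ (W j k) (V j k) _
      (hstep j k hj1 (by omega) hk1 (by omega))
  have summed := sum_eq_zero fun j hj => sum_eq_zero fun k hk => pointwise j hj k hk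
  simp only [sum_add_distrib, ← sum_div, sum_sub_distrib, ← mul_sum, ← im_sum,
    im_sum_delta2_mul_conj Δx Δy J K u (memX_midpoint hW hV), add_zero] at summed
  unfold normP
  linear_combination (Δx * Δy) * summed

theorem stmt4_general (J K : ℕ) (Δx Δy : ℝ) (lam ν ε τ : ℝ)
    (N : ℕ) (U : ℕ → ℕ → ℕ → ℂ) (hU : isCNFD Δx Δy J K lam ν ε τ N U)
    (m : ℕ) (hm' : m ≤ N) :
    (normP Δx Δy J K 2 (U m) - normP Δx Δy J K 2 (U 0)) / (2 * τ) +
      ε * ∑ n ∈ Finset.range m,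
        normP Δx Δy J K 4 (fun j k => (U (n + 1) j k + U n j k) / 2) = 0 := by
  have steps : ∀ n ∈ range m,
      (normP Δx Δy J K 2 (U (n + 1)) - normP Δx Δy J K 2 (U n)) / (2 * τ) +
        ε * normP Δx Δy J K 4 (fun j k => (U (n + 1) j k + U n j k) / 2) = 0 := by
    intro n hn
    have hn : n < m := mem_range.mp hn
    exact mass_balance_step Δx Δy J K lam ν ε τ (U (n + 1)) (U n)
      (hU.1 (n + 1) (by omega)) (hU.1 n (by omega)) (hU.2 n (by omega))
  have summed := sum_eq_zero steps
  rwa [sum_add_distrib, ← sum_div, sum_range_sub (fun n => normP Δx Δy J K 2 (U n)),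
    ← mul_sum] at summed

/-- exact discrete mass balance identity. -/
theorem stmt4 (J K : ℕ) (hJ : 2 ≤ J) (hK : 2 ≤ K) (a b c d : ℝ) (hab : a < b) (hcd : c < d)
    (Δx Δy : ℝ) (hΔx : Δx = (b - a) / J) (hΔy : Δy = (d - c) / K)
    (lam ν ε τ : ℝ) (hν : 0 < ν) (hε : 0 ≤ ε) (hτ : 0 < τ)
    (N : ℕ) (U : ℕ → ℕ → ℕ → ℂ) (hU : isCNFD Δx Δy J K lam ν ε τ N U)
    (m : ℕ) (hm : 1 ≤ m) (hm' : m ≤ N) :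
    (normP Δx Δy J K 2 (U m) - normP Δx Δy J K 2 (U 0)) / (2 * τ) +
      ε * ∑ n ∈ Finset.range m,
        normP Δx Δy J K 4 (fun j k => (U (n + 1) j k + U n j k) / 2) = 0 :=
  stmt4_general J K Δx Δy lam ν ε τ N U hU m hm'
end
end

section
/- Let {Uⁿ}_{n=0}^N be a CNFD solution and 0 ≤ n ≤ N−1. Then Im(⟨U^{n+1}, Uⁿ·|U^{n+1/2}|²⟩_h) ≤ (τλ/2)·ΔxΔy Σ_{j=1}^{J−1} Σ_{k=1}^{K−1} (|U^{n+1}_{j,k}|² + |Uⁿ_{j,k}|²)|U^{n+1/2}_{j,k}|⁴ − (τν/3)·ΔxΔy Σ_{j=1}^{J−1} Σ_{k=1}^{K−1} (|U^{n+1}_{j,k}|⁴ + |U^{n+1}_{j,k}|²|Uⁿ_{j,k}|² + |Uⁿ_{j,k}|⁴)|U^{n+1/2}_{j,k}|⁴, where ⟨U^{n+1}, Uⁿ·|U^{n+1/2}|²⟩_h = ΔxΔy Σ_{j=1}^{J−1} Σ_{k=1}^{K−1} U^{n+1}_{j,k} · conj(Uⁿ_{j,k}) · |U^{n+1/2}_{j,k}|².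 -/
noncomputable section

open Finset Complex ComplexConjugate

/-!
Write `M = U^{n+1/2}` and multiply the scheme at `(j,k)` by `τ · conj M · |M|²`. Taking real parts,
the time difference becomes `-Im(U^{n+1} conj Uⁿ)|M|²`, the two nonlinearities `ψ₁, ψ₂` become the
two sums of the right-hand side, and the damping term `iεφ` is purely imaginary, so it drops out.
What remains is `τ Re ⟨δ²M, |M|² M⟩_h`, which is `≤ 0`: summation by parts turns it into
`-Re Σ (M' - M) conj(|M'|² M' - |M|² M)` over neighbouring pairs, and `z ↦ |z|² z` is monotone.
-/

lemma re_sub_mul_conj_cube_sub_nonneg (z w : ℂ) :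
    0 ≤ ((z - w) * (conj z * ((‖z‖ ^ 2 : ℝ) : ℂ) - conj w * ((‖w‖ ^ 2 : ℝ) : ℂ))).re := by
  simp only [Complex.sq_norm, Complex.normSq_apply, mul_re, sub_re, sub_im, mul_im, conj_re,
    conj_im, ofReal_re, ofReal_im]
  nlinarith [sq_nonneg (z.re - w.re), sq_nonneg (z.im - w.im),
    sq_nonneg (z.re ^ 2 + z.im ^ 2 - w.re ^ 2 - w.im ^ 2),
    mul_nonneg (add_nonneg (add_nonneg (sq_nonneg z.re) (sq_nonneg z.im))
        (add_nonneg (sq_nonneg w.re) (sq_nonneg w.im)))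
      (add_nonneg (sq_nonneg (z.re - w.re)) (sq_nonneg (z.im - w.im)))]

lemma sum_range_secondDiff_mul {R : Type*} [CommRing R] (f g : ℕ → R) (J : ℕ)
    (h0 : g 0 = 0) (hJ : g J = 0) :
    ∑ j ∈ range J, (f (j + 1) - 2 * f j + f (j - 1)) * g j =
      -∑ j ∈ range J, (f (j + 1) - f j) * (g (j + 1) - g j) := by
  have hshift : ∑ j ∈ range J, (f (j + 1) - f j) * g (j + 1) =
      ∑ j ∈ range J, (f j - f (j - 1)) * g j := by
    have h := (sum_range_succ' (fun j => (f j - f (j - 1)) * g j) J).symm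
    simpa [h0, hJ, sum_range_succ] using h
  rw [← sub_eq_zero, sub_neg_eq_add, ← sum_add_distrib, ← sub_eq_zero_of_eq hshift,
    ← sum_sub_distrib]
  exact sum_congr rfl fun j _ => by ring

lemma sum_range_re_secondDiff_mul_conj_cube_nonpos (f : ℕ → ℂ) (J : ℕ)
    (h0 : f 0 = 0) (hJ : f J = 0) :
    ∑ j ∈ range J,
      ((f (j + 1) - 2 * f j + f (j - 1)) * (conj (f j) * ((‖f j‖ ^ 2 : ℝ) : ℂ))).re ≤ 0 := by
  rw [← re_sum, sum_range_secondDiff_mul f _ J (by simp [h0]) (by simp [hJ]), neg_re, re_sum,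
    neg_nonpos]
  exact sum_nonneg fun j _ => re_sub_mul_conj_cube_sub_nonneg _ _

lemma sum_Icc_one_pred_eq_sum_range {M : Type*} [AddCommMonoid M] (F : ℕ → M) (J : ℕ)
    (h0 : F 0 = 0) : ∑ j ∈ Icc 1 (J - 1), F j = ∑ j ∈ range J, F j := by
  rw [← sum_erase (range J) h0]
  congr 1
  ext j
  simp only [mem_Icc, mem_erase, mem_range]
  omega

lemma re_delta2_mul (Δx Δy : ℝ) (u : ℕ → ℕ → ℂ) (j k : ℕ) (q : ℂ) :
    (delta2 Δx Δy u j k * q).re =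
      ((u (j + 1) k - 2 * u j k + u (j - 1) k) * q).re / Δx ^ 2 +
        ((u j (k + 1) - 2 * u j k + u j (k - 1)) * q).re / Δy ^ 2 := by
  rw [delta2, add_mul, div_mul_eq_mul_div, div_mul_eq_mul_div, add_re, ← ofReal_pow,
    ← ofReal_pow, div_ofReal_re, div_ofReal_re]

lemma sum_re_delta2_mul_conj_cube_nonpos (Δx Δy : ℝ) {J K : ℕ} {u : ℕ → ℕ → ℂ}
    (hu : memX J K u) :
    ∑ j ∈ Icc 1 (J - 1), ∑ k ∈ Icc 1 (K - 1),
      (delta2 Δx Δy u j k * (conj (u j k) * ((‖u j k‖ ^ 2 : ℝ) : ℂ))).re ≤ 0 := by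
  obtain ⟨h0, hJ, hk0, hK⟩ := hu
  simp only [re_delta2_mul, sum_add_distrib, ← sum_div]
  have hx : ∑ j ∈ Icc 1 (J - 1), ∑ k ∈ Icc 1 (K - 1),
      ((u (j + 1) k - 2 * u j k + u (j - 1) k) * (conj (u j k) * ((‖u j k‖ ^ 2 : ℝ) : ℂ))).re
        ≤ 0 := by
    rw [sum_comm]
    refine sum_nonpos fun k _ => ?_
    rw [sum_Icc_one_pred_eq_sum_range _ J (by simp [h0 k])]
    exact sum_range_re_secondDiff_mul_conj_cube_nonpos (fun j => u j k) J (h0 k) (hJ k)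
  have hy : ∑ j ∈ Icc 1 (J - 1), ∑ k ∈ Icc 1 (K - 1),
      ((u j (k + 1) - 2 * u j k + u j (k - 1)) * (conj (u j k) * ((‖u j k‖ ^ 2 : ℝ) : ℂ))).re
        ≤ 0 := by
    refine sum_nonpos fun j _ => ?_
    rw [sum_Icc_one_pred_eq_sum_range _ K (by simp [hk0 j])]
    exact sum_range_re_secondDiff_mul_conj_cube_nonpos (u j) K (hk0 j) (hK j)
  exact add_nonpos (div_nonpos_of_nonpos_of_nonneg hx (sq_nonneg _))
    (div_nonpos_of_nonpos_of_nonneg hy (sq_nonneg _))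

lemma norm_pow_four (z : ℂ) : ‖z‖ ^ 4 = normSq z ^ 2 := by
  rw [show 4 = 2 * 2 from rfl, pow_mul, Complex.sq_norm]

lemma im_mul_conj_mul_sq_norm_midpoint_eq {τ lam ν ε : ℝ} (hτ : τ ≠ 0) {w v D : ℂ}
    (hE : I * (w - v) / τ + D + lam * psi1 w v - ν * psi2 w v + I * ε * phi w v = 0) :
    (w * conj v * ((‖(w + v) / 2‖ ^ 2 : ℝ) : ℂ)).im =
      τ * (D * (conj ((w + v) / 2) * ((‖(w + v) / 2‖ ^ 2 : ℝ) : ℂ))).re +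
        τ * lam / 2 * ((‖w‖ ^ 2 + ‖v‖ ^ 2) * ‖(w + v) / 2‖ ^ 4) -
        τ * ν / 3 * ((‖w‖ ^ 4 + ‖w‖ ^ 2 * ‖v‖ ^ 2 + ‖v‖ ^ 4) * ‖(w + v) / 2‖ ^ 4) := by
  have hτD : (τ : ℂ) * D = -(I * (w - v)) - τ * lam * psi1 w v + τ * ν * psi2 w v -
      τ * I * ε * phi w v := by
    rw [div_eq_mul_inv] at hE
    linear_combination (τ : ℂ) * hE - I * (w - v) * mul_inv_cancel₀ (ofReal_ne_zero.2 hτ)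
  rw [← re_ofReal_mul, ← mul_assoc, hτD]
  simp only [psi1, psi2, phi, norm_pow_four, Complex.sq_norm, normSq_apply, mul_re, mul_im,
    add_re, add_im, sub_re, sub_im, neg_re, neg_im, div_re, div_im, I_re, I_im, ofReal_re,
    ofReal_im, conj_re, conj_im, re_ofNat, im_ofNat]
  ring

theorem stmt7_general (J K : ℕ) (a b c d : ℝ) (hab : a < b) (hcd : c < d)
    (Δx Δy : ℝ) (hΔx : Δx = (b - a) / J) (hΔy : Δy = (d - c) / K)
    (lam ν ε τ : ℝ) (hτ : 0 < τ)
    (N : ℕ) (U : ℕ → ℕ → ℕ → ℂ) (hU : isCNFD Δx Δy J K lam ν ε τ N U)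
    (n : ℕ) (hn : n < N) :
    (((Δx * Δy : ℝ) : ℂ) * ∑ j ∈ Finset.Icc 1 (J - 1), ∑ k ∈ Finset.Icc 1 (K - 1),
        U (n + 1) j k * conj (U n j k) *
          ((‖(U (n + 1) j k + U n j k) / 2‖ ^ 2 : ℝ) : ℂ)).im ≤
      τ * lam / 2 * (Δx * Δy * ∑ j ∈ Finset.Icc 1 (J - 1), ∑ k ∈ Finset.Icc 1 (K - 1),
          (‖U (n + 1) j k‖ ^ 2 + ‖U n j k‖ ^ 2) *
            ‖(U (n + 1) j k + U n j k) / 2‖ ^ 4) -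
      τ * ν / 3 * (Δx * Δy * ∑ j ∈ Finset.Icc 1 (J - 1), ∑ k ∈ Finset.Icc 1 (K - 1),
          (‖U (n + 1) j k‖ ^ 4 +
            ‖U (n + 1) j k‖ ^ 2 * ‖U n j k‖ ^ 2 +
            ‖U n j k‖ ^ 4) *
            ‖(U (n + 1) j k + U n j k) / 2‖ ^ 4) := by
  set M : ℕ → ℕ → ℂ := fun j k => (U (n + 1) j k + U n j k) / 2
  have hM : memX J K M := memX_midpoint (hU.1 (n + 1) hn) (hU.1 n hn.le)
  have hΔ : 0 ≤ Δx * Δy := by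
    rw [hΔx, hΔy]
    exact mul_nonneg (div_nonneg (by linarith) J.cast_nonneg)
      (div_nonneg (by linarith) K.cast_nonneg)
  have hlap := mul_nonpos_of_nonneg_of_nonpos (mul_nonneg hΔ hτ.le)
    (sum_re_delta2_mul_conj_cube_nonpos Δx Δy hM)
  simp only [im_ofReal_mul, im_sum]
  rw [sum_congr rfl fun j hj => sum_congr rfl fun k hk =>
    im_mul_conj_mul_sq_norm_midpoint_eq hτ.ne' (hU.2 n hn j k (mem_Icc.1 hj).1 (mem_Icc.1 hj).2
      (mem_Icc.1 hk).1 (mem_Icc.1 hk).2)]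
  simp only [sum_add_distrib, sum_sub_distrib, ← mul_sum]
  linarith

/-- the key imaginary-part estimate for the cubic damping term. -/
theorem stmt7 (J K : ℕ) (hJ : 2 ≤ J) (hK : 2 ≤ K) (a b c d : ℝ) (hab : a < b) (hcd : c < d)
    (Δx Δy : ℝ) (hΔx : Δx = (b - a) / J) (hΔy : Δy = (d - c) / K)
    (lam ν ε τ : ℝ) (hν : 0 < ν) (hε : 0 ≤ ε) (hτ : 0 < τ)
    (N : ℕ) (U : ℕ → ℕ → ℕ → ℂ) (hU : isCNFD Δx Δy J K lam ν ε τ N U)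
    (n : ℕ) (hn : n < N) :
    (((Δx * Δy : ℝ) : ℂ) * ∑ j ∈ Finset.Icc 1 (J - 1), ∑ k ∈ Finset.Icc 1 (K - 1),
        U (n + 1) j k * conj (U n j k) *
          ((‖(U (n + 1) j k + U n j k) / 2‖ ^ 2 : ℝ) : ℂ)).im ≤
      τ * lam / 2 * (Δx * Δy * ∑ j ∈ Finset.Icc 1 (J - 1), ∑ k ∈ Finset.Icc 1 (K - 1),
          (‖U (n + 1) j k‖ ^ 2 + ‖U n j k‖ ^ 2) *
            ‖(U (n + 1) j k + U n j k) / 2‖ ^ 4) -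
      τ * ν / 3 * (Δx * Δy * ∑ j ∈ Finset.Icc 1 (J - 1), ∑ k ∈ Finset.Icc 1 (K - 1),
          (‖U (n + 1) j k‖ ^ 4 +
            ‖U (n + 1) j k‖ ^ 2 * ‖U n j k‖ ^ 2 +
            ‖U n j k‖ ^ 4) *
            ‖(U (n + 1) j k + U n j k) / 2‖ ^ 4) :=
  stmt7_general J K a b c d hab hcd Δx Δy hΔx hΔy lam ν ε τ hτ N U hU n hn
end
end

section
/- Suppose ε = 0 and let {Uⁿ}_{n=0}^N be a CNFD solution. Then the CNFD scheme conserves both the discrete mass and the discrete energy: ‖Uⁿ‖²_{2,h} = ‖U⁰‖²_{2,h} and E_h(Uⁿ) = E_h(U⁰) for every n = 0, 1, …, N. -/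
noncomputable section

open Finset Complex ComplexConjugate

/-!
Pair the scheme at each interior point with the conjugate of `(Uⁿ⁺¹ + Uⁿ)/2` and take imaginary
parts, or with the conjugate of `Uⁿ⁺¹ - Uⁿ` and take real parts. Pointwise, the time difference
then contributes `(|Uⁿ⁺¹|² - |Uⁿ|²)/(2τ)`, respectively nothing, while the nonlinear terms
contribute nothing, respectively exact differences of `|U|⁴/4` and `|U|⁶/6`; the averages in
`ψ₁`, `ψ₂` are chosen precisely so that this happens. Summation by parts turns the Laplacian term
into a discrete Dirichlet form, which is real in the first case and a difference of
`‖δ⁺U‖²_{2,h}/2` in the second. Hence each time step preserves mass and energy.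
-/

theorem sum_range_eq_sum_Ico_one {M : Type*} [AddCommMonoid M] (f : ℕ → M) (h : f 0 = 0)
    (n : ℕ) : ∑ j ∈ range n, f j = ∑ j ∈ Ico 1 n, f j := by
  refine (sum_subset (fun j hj => ?_) fun j hj hj' => ?_).symm
  · simp only [mem_Ico, mem_range] at hj ⊢
    exact hj.2
  · obtain rfl : j = 0 := by simp only [mem_Ico, mem_range] at hj hj'; omega
    exact h

theorem sum_Ico_secondDiff_mul {R : Type*} [CommRing R] (f g : ℕ → R) {n : ℕ}
    (hg0 : g 0 = 0) (hgn : g n = 0) :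
    ∑ j ∈ Ico 1 n, (f (j + 1) - 2 * f j + f (j - 1)) * g j =
      -∑ j ∈ range n, (f (j + 1) - f j) * (g (j + 1) - g j) := by
  obtain _ | n := n
  · simp
  have hshift : ∑ j ∈ Ico 1 (n + 1), (f j - f (j - 1)) * g j =
      ∑ j ∈ range (n + 1), (f (j + 1) - f j) * g (j + 1) := by
    rw [sum_range_succ, hgn, mul_zero, add_zero, sum_Ico_eq_sum_range]
    simp [add_comm]
  have hdrop : ∑ j ∈ range (n + 1), (f (j + 1) - f j) * g j =
      ∑ j ∈ Ico 1 (n + 1), (f (j + 1) - f j) * g j :=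
    sum_range_eq_sum_Ico_one _ (by simp [hg0]) _
  calc ∑ j ∈ Ico 1 (n + 1), (f (j + 1) - 2 * f j + f (j - 1)) * g j
      = ∑ j ∈ Ico 1 (n + 1), (f (j + 1) - f j) * g j -
          ∑ j ∈ Ico 1 (n + 1), (f j - f (j - 1)) * g j := by
        rw [← sum_sub_distrib]
        exact sum_congr rfl fun j _ => by ring
    _ = _ := by
        rw [← hdrop, hshift, ← sum_sub_distrib, ← sum_neg_distrib]
        exact sum_congr rfl fun j _ => by ring

theorem memX.map₂ {J K : ℕ} {u v : ℕ → ℕ → ℂ} (hu : memX J K u) (hv : memX J K v)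
    (F : ℂ → ℂ → ℂ) (hF : F 0 0 = 0) : memX J K (fun j k => F (u j k) (v j k)) := by
  obtain ⟨hu₁, hu₂, hu₃, hu₄⟩ := hu
  obtain ⟨hv₁, hv₂, hv₃, hv₄⟩ := hv
  exact ⟨fun k => by simp [hu₁, hv₁, hF], fun k => by simp [hu₂, hv₂, hF],
    fun j => by simp [hu₃, hv₃, hF], fun j => by simp [hu₄, hv₄, hF]⟩

theorem normP_eq_sum_Ico {Δx Δy : ℝ} {J K : ℕ} {u : ℕ → ℕ → ℂ} (hu : memX J K u) {p : ℕ}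
    (hp : p ≠ 0) :
    normP Δx Δy J K p u = Δx * Δy * ∑ j ∈ Ico 1 J, ∑ k ∈ Ico 1 K, ‖u j k‖ ^ p := by
  rw [normP, sum_range_eq_sum_Ico_one _ (by simp [hu.1, hp])]
  congr 2 with j
  exact sum_range_eq_sum_Ico_one _ (by simp [hu.2.2.1, hp]) _

def gradInner (Δx Δy : ℝ) (J K : ℕ) (u v : ℕ → ℕ → ℂ) : ℂ :=
  ∑ j ∈ range J, ∑ k ∈ range K,
    ((u (j + 1) k - u j k) / Δx * conj ((v (j + 1) k - v j k) / Δx) +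
      (u j (k + 1) - u j k) / Δy * conj ((v j (k + 1) - v j k) / Δy))

theorem sum_Ico_delta2_mul_conj {Δx Δy : ℝ} {J K : ℕ} (u : ℕ → ℕ → ℂ) {v : ℕ → ℕ → ℂ}
    (hv : memX J K v) :
    ∑ j ∈ Ico 1 J, ∑ k ∈ Ico 1 K, delta2 Δx Δy u j k * conj (v j k) =
      -gradInner Δx Δy J K u v := by
  obtain ⟨hv₁, hv₂, hv₃, hv₄⟩ := hv
  have hx : ∑ j ∈ Ico 1 J, ∑ k ∈ Ico 1 K,
      (u (j + 1) k - 2 * u j k + u (j - 1) k) * conj (v j k) =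
      -∑ j ∈ range J, ∑ k ∈ range K,
        (u (j + 1) k - u j k) * (conj (v (j + 1) k) - conj (v j k)) := by
    rw [sum_comm, sum_comm (s := range J),
      sum_congr rfl fun k _ => sum_Ico_secondDiff_mul (fun j => u j k) (fun j => conj (v j k))
        (by simp [hv₁]) (by simp [hv₂]),
      sum_neg_distrib, sum_range_eq_sum_Ico_one _ (by simp [hv₃])]
  have hy : ∑ j ∈ Ico 1 J, ∑ k ∈ Ico 1 K,
      (u j (k + 1) - 2 * u j k + u j (k - 1)) * conj (v j k) =
      -∑ j ∈ range J, ∑ k ∈ range K,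
        (u j (k + 1) - u j k) * (conj (v j (k + 1)) - conj (v j k)) := by
    rw [sum_congr rfl fun j _ => sum_Ico_secondDiff_mul (fun k => u j k) (fun k => conj (v j k))
        (by simp [hv₃]) (by simp [hv₄]),
      sum_neg_distrib, sum_range_eq_sum_Ico_one _ (by simp [hv₁])]
  calc ∑ j ∈ Ico 1 J, ∑ k ∈ Ico 1 K, delta2 Δx Δy u j k * conj (v j k)
      = 1 / (Δx : ℂ) ^ 2 * ∑ j ∈ Ico 1 J, ∑ k ∈ Ico 1 K,
            (u (j + 1) k - 2 * u j k + u (j - 1) k) * conj (v j k) +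
          1 / (Δy : ℂ) ^ 2 * ∑ j ∈ Ico 1 J, ∑ k ∈ Ico 1 K,
            (u j (k + 1) - 2 * u j k + u j (k - 1)) * conj (v j k) := by
        simp only [mul_sum, ← sum_add_distrib]
        exact sum_congr rfl fun j _ => sum_congr rfl fun k _ => by rw [delta2]; ring
    _ = -gradInner Δx Δy J K u v := by
        rw [hx, hy, gradInner]
        simp only [mul_neg, mul_sum, ← sum_add_distrib, ← sum_neg_distrib, map_sub, map_div₀,
          conj_ofReal]
        exact sum_congr rfl fun j _ => sum_congr rfl fun k _ => by ring

theorem gradInner_self (Δx Δy : ℝ) (J K : ℕ) (u : ℕ → ℕ → ℂ) :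
    gradInner Δx Δy J K u u = ((∑ j ∈ range J, ∑ k ∈ range K,
      (‖(u (j + 1) k - u j k) / (Δx : ℂ)‖ ^ 2 +
        ‖(u j (k + 1) - u j k) / (Δy : ℂ)‖ ^ 2) : ℝ) : ℂ) := by
  simp only [gradInner, mul_conj', ofReal_sum, ofReal_add, ofReal_pow]

theorem re_midpoint_mul_conj_sub (z w : ℂ) :
    ((z + w) / 2 * conj (z - w)).re = (‖z‖ ^ 2 - ‖w‖ ^ 2) / 2 := by
  simp only [Complex.sq_norm, normSq_apply, mul_re, div_re, div_im, conj_re, conj_im, add_re,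
    add_im, sub_re, sub_im, re_ofNat, im_ofNat]
  ring

theorem re_gradInner_midpoint_sub (Δx Δy : ℝ) (J K : ℕ) (W V : ℕ → ℕ → ℂ) :
    Δx * Δy * (gradInner Δx Δy J K (fun j k => (W j k + V j k) / 2)
      (fun j k => W j k - V j k)).re = (gradSq Δx Δy J K W - gradSq Δx Δy J K V) / 2 := by
  simp only [gradInner, gradSq, re_sum, add_re, ← mul_sub, ← sum_sub_distrib, mul_div_assoc,
    sum_div]
  congr 1
  refine sum_congr rfl fun j _ => sum_congr rfl fun k _ => ?_
  have hmid : ∀ (a b c d : ℂ) (h : ℝ),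
      (((a + b) / 2 - (c + d) / 2) / h * conj ((a - b - (c - d)) / h)).re =
        (‖(a - c) / (h : ℂ)‖ ^ 2 - ‖(b - d) / (h : ℂ)‖ ^ 2) / 2 := by
    intro a b c d h
    rw [show ((a + b) / 2 - (c + d) / 2) / h = ((a - c) / h + (b - d) / h) / 2 by ring,
      show (a - b - (c - d)) / h = (a - c) / h - (b - d) / h by ring, re_midpoint_mul_conj_sub]
  rw [hmid, hmid]
  ring

theorem im_ofReal_mul_mul_conj_self (r : ℝ) (m : ℂ) : ((r : ℂ) * m * conj m).im = 0 := by
  rw [mul_assoc, im_ofReal_mul, mul_conj, ofReal_im, mul_zero]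

theorem im_psi1_mul_conj_midpoint (z w : ℂ) : (psi1 z w * conj ((z + w) / 2)).im = 0 :=
  im_ofReal_mul_mul_conj_self _ _

theorem im_psi2_mul_conj_midpoint (z w : ℂ) : (psi2 z w * conj ((z + w) / 2)).im = 0 :=
  im_ofReal_mul_mul_conj_self _ _

theorem re_psi1_mul_conj_sub (z w : ℂ) :
    (psi1 z w * conj (z - w)).re = (‖z‖ ^ 4 - ‖w‖ ^ 4) / 4 := by
  rw [psi1, mul_assoc, re_ofReal_mul, re_midpoint_mul_conj_sub]
  ring

theorem re_psi2_mul_conj_sub (z w : ℂ) :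
    (psi2 z w * conj (z - w)).re = (‖z‖ ^ 6 - ‖w‖ ^ 6) / 6 := by
  rw [psi2, mul_assoc, re_ofReal_mul, re_midpoint_mul_conj_sub]
  ring

theorem im_timeDiff_mul_conj_midpoint (τ : ℝ) (z w : ℂ) :
    (I * (z - w) / τ * conj ((z + w) / 2)).im = (‖z‖ ^ 2 - ‖w‖ ^ 2) / (2 * τ) := by
  simp only [Complex.sq_norm, normSq_apply, mul_re, mul_im, div_re, div_im, conj_re, conj_im,
    add_re, add_im, sub_re, sub_im, I_re, I_im, ofReal_re, ofReal_im, re_ofNat, im_ofNat]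
  by_cases hτ : τ = 0
  · simp [hτ]
  field_simp
  ring

theorem re_timeDiff_mul_conj_sub (τ : ℝ) (z w : ℂ) :
    (I * (z - w) / τ * conj (z - w)).re = 0 := by
  have h : I * (z - w) / τ * conj (z - w) = ((‖z - w‖ ^ 2 / τ : ℝ) : ℂ) * I := by
    push_cast
    rw [← mul_conj']
    ring
  rw [h, re_ofReal_mul, I_re, mul_zero]

section PointwiseBalance

variable {lam ν τ : ℝ} {z w L : ℂ}

theorem im_mul_conj_midpoint_of_balance
    (hL : I * (z - w) / τ + L + lam * psi1 z w - ν * psi2 z w = 0) :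
    (L * conj ((z + w) / 2)).im = -((‖z‖ ^ 2 - ‖w‖ ^ 2) / (2 * τ)) := by
  have h : L * conj ((z + w) / 2) = ν * (psi2 z w * conj ((z + w) / 2)) -
      lam * (psi1 z w * conj ((z + w) / 2)) - I * (z - w) / τ * conj ((z + w) / 2) := by
    linear_combination conj ((z + w) / 2) * hL
  rw [h, sub_im, sub_im, im_timeDiff_mul_conj_midpoint, im_ofReal_mul, im_ofReal_mul,
    im_psi1_mul_conj_midpoint, im_psi2_mul_conj_midpoint]
  ring

theorem re_mul_conj_sub_of_balance
    (hL : I * (z - w) / τ + L + lam * psi1 z w - ν * psi2 z w = 0) :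
    (L * conj (z - w)).re =
      ν * ((‖z‖ ^ 6 - ‖w‖ ^ 6) / 6) - lam * ((‖z‖ ^ 4 - ‖w‖ ^ 4) / 4) := by
  have h : L * conj (z - w) = ν * (psi2 z w * conj (z - w)) -
      lam * (psi1 z w * conj (z - w)) - I * (z - w) / τ * conj (z - w) := by
    linear_combination conj (z - w) * hL
  rw [h, sub_re, sub_re, re_timeDiff_mul_conj_sub, re_ofReal_mul, re_ofReal_mul,
    re_psi1_mul_conj_sub, re_psi2_mul_conj_sub, sub_zero]

end PointwiseBalance

namespace stepEq

variable {Δx Δy : ℝ} {J K : ℕ} {lam ν τ : ℝ} {W V : ℕ → ℕ → ℂ}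

theorem balance (h : stepEq Δx Δy J K lam ν 0 τ W V) {j k : ℕ} (hj : j ∈ Ico 1 J)
    (hk : k ∈ Ico 1 K) :
    I * (W j k - V j k) / τ + delta2 Δx Δy (fun j k => (W j k + V j k) / 2) j k +
      lam * psi1 (W j k) (V j k) - ν * psi2 (W j k) (V j k) = 0 := by
  rw [mem_Ico] at hj hk
  simpa only [ofReal_zero, mul_zero, zero_mul, add_zero] using
    h j k hj.1 (by omega) hk.1 (by omega)

theorem normP_two_eq (h : stepEq Δx Δy J K lam ν 0 τ W V) (hτ : τ ≠ 0) (hW : memX J K W)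
    (hV : memX J K V) : normP Δx Δy J K 2 W = normP Δx Δy J K 2 V := by
  have hS := hW.map₂ hV (fun z w => (z + w) / 2) (by simp)
  have hsum : (∑ j ∈ Ico 1 J, ∑ k ∈ Ico 1 K,
      delta2 Δx Δy (fun j k => (W j k + V j k) / 2) j k * conj ((W j k + V j k) / 2)).im =
      -((∑ j ∈ Ico 1 J, ∑ k ∈ Ico 1 K, ‖W j k‖ ^ 2 -
        ∑ j ∈ Ico 1 J, ∑ k ∈ Ico 1 K, ‖V j k‖ ^ 2) / (2 * τ)) := by
    simp only [im_sum]
    rw [sum_congr rfl fun j hj => sum_congr rfl fun k hk =>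
      im_mul_conj_midpoint_of_balance (h.balance hj hk)]
    simp only [sub_div, sum_div, sum_sub_distrib, sum_neg_distrib]
  rw [sum_Ico_delta2_mul_conj _ hS, neg_im, gradInner_self, ofReal_im, neg_zero, eq_comm,
    neg_eq_zero, div_eq_zero_iff, sub_eq_zero] at hsum
  rw [normP_eq_sum_Ico hW two_ne_zero, normP_eq_sum_Ico hV two_ne_zero,
    hsum.resolve_right (mul_ne_zero two_ne_zero hτ)]

theorem energy_eq (h : stepEq Δx Δy J K lam ν 0 τ W V) (hW : memX J K W) (hV : memX J K V) :
    energy Δx Δy J K lam ν W = energy Δx Δy J K lam ν V := by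
  have hD := hW.map₂ hV (fun z w => z - w) (by simp)
  have hsum : (∑ j ∈ Ico 1 J, ∑ k ∈ Ico 1 K,
      delta2 Δx Δy (fun j k => (W j k + V j k) / 2) j k * conj (W j k - V j k)).re =
      ν * ((∑ j ∈ Ico 1 J, ∑ k ∈ Ico 1 K, ‖W j k‖ ^ 6 -
        ∑ j ∈ Ico 1 J, ∑ k ∈ Ico 1 K, ‖V j k‖ ^ 6) / 6) -
      lam * ((∑ j ∈ Ico 1 J, ∑ k ∈ Ico 1 K, ‖W j k‖ ^ 4 -
        ∑ j ∈ Ico 1 J, ∑ k ∈ Ico 1 K, ‖V j k‖ ^ 4) / 4) := by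
    simp only [re_sum]
    rw [sum_congr rfl fun j hj => sum_congr rfl fun k hk =>
      re_mul_conj_sub_of_balance (h.balance hj hk)]
    simp only [sub_div, sum_div, sum_sub_distrib, ← mul_sum]
  rw [sum_Ico_delta2_mul_conj _ hD, neg_re] at hsum
  have hgrad := re_gradInner_midpoint_sub Δx Δy J K W V
  rw [energy, energy, normP_eq_sum_Ico hW four_ne_zero, normP_eq_sum_Ico hV four_ne_zero,
    normP_eq_sum_Ico hW (by norm_num : 6 ≠ 0), normP_eq_sum_Ico hV (by norm_num : 6 ≠ 0)]
  linear_combination -2 * hgrad - 2 * Δx * Δy * hsum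

end stepEq

theorem stmt11_general (J K : ℕ) (Δx Δy : ℝ) (lam ν τ : ℝ) (hτ : 0 < τ)
    (N : ℕ) (U : ℕ → ℕ → ℕ → ℂ) (hU : isCNFD Δx Δy J K lam ν 0 τ N U)
    (n : ℕ) (hn : n ≤ N) :
    normP Δx Δy J K 2 (U n) = normP Δx Δy J K 2 (U 0) ∧
      energy Δx Δy J K lam ν (U n) = energy Δx Δy J K lam ν (U 0) := by
  induction n with
  | zero => exact ⟨rfl, rfl⟩
  | succ n ih =>
    obtain ⟨hmass, henergy⟩ := ih (by omega)
    have hstep := hU.2 n hn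
    have hnext := hU.1 (n + 1) hn
    have hcur := hU.1 n (by omega)
    exact ⟨(hstep.normP_two_eq hτ.ne' hnext hcur).trans hmass,
      (hstep.energy_eq hnext hcur).trans henergy⟩

/-- with `ε = 0` the CNFD scheme conserves the discrete mass and energy. -/
theorem stmt11 (J K : ℕ) (hJ : 2 ≤ J) (hK : 2 ≤ K) (a b c d : ℝ) (hab : a < b) (hcd : c < d)
    (Δx Δy : ℝ) (hΔx : Δx = (b - a) / J) (hΔy : Δy = (d - c) / K)
    (lam ν τ : ℝ) (hν : 0 < ν) (hτ : 0 < τ)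
    (N : ℕ) (U : ℕ → ℕ → ℕ → ℂ) (hU : isCNFD Δx Δy J K lam ν 0 τ N U)
    (n : ℕ) (hn : n ≤ N) :
    normP Δx Δy J K 2 (U n) = normP Δx Δy J K 2 (U 0) ∧
      energy Δx Δy J K lam ν (U n) = energy Δx Δy J K lam ν (U 0) :=
  stmt11_general J K Δx Δy lam ν τ hτ N U hU n hn
end
end

section
/- For every u ∈ X_JK one has Re(⟨δ²u, u·|u|²⟩_h) ≤ 0, where (u·|u|²)_{j,k} = u_{j,k}|u_{j,k}|². -/
noncomputable section

open Finset Complex ComplexConjugate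

/-!
Summation by parts in each grid direction turns `⟨δ²u, u|u|²⟩_h` into minus a sum of terms
`Re ((z - w) · conj (z|z|² - w|w|²))`, and each of these is nonnegative because `z ↦ z|z|²`
is monotone (it is the gradient of `|z|⁴/4`).
-/

abbrev cubic (z : ℂ) : ℂ := z * ((‖z‖ ^ 2 : ℝ) : ℂ)

theorem re_sub_mul_conj_cubic_sub_nonneg (z w : ℂ) :
    0 ≤ ((z - w) * conj (cubic z - cubic w)).re := by
  simp only [cubic, Complex.sq_norm, Complex.normSq_apply, map_sub, map_mul, Complex.conj_ofReal,
    Complex.sub_re, Complex.mul_re, Complex.mul_im, Complex.ofReal_re, Complex.ofReal_im,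
    Complex.conj_re, Complex.conj_im, Complex.sub_im]
  nlinarith [sq_nonneg (z.re ^ 2 + z.im ^ 2 - w.re ^ 2 - w.im ^ 2),
    mul_nonneg (add_nonneg (sq_nonneg (z.re - w.re)) (sq_nonneg (z.im - w.im)))
      (by positivity : (0 : ℝ) ≤ z.re ^ 2 + z.im ^ 2 + w.re ^ 2 + w.im ^ 2)]

theorem sum_second_diff_mul_conj (n : ℕ) (f g : ℕ → ℂ) (hg0 : g 0 = 0) (hgn : g n = 0) :
    ∑ j ∈ Icc 1 (n - 1), (f (j + 1) - 2 * f j + f (j - 1)) * conj (g j)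
      = -∑ j ∈ range n, (f (j + 1) - f j) * conj (g (j + 1) - g j) := by
  rcases Nat.eq_zero_or_pos n with rfl | hn
  · simp
  obtain ⟨m, rfl⟩ : ∃ m, n = m + 1 := ⟨n - 1, by omega⟩
  set A : ℕ → ℂ := fun j => (f (j + 1) - f j) * conj (g j)
  have hshift : ∑ j ∈ Icc 1 m, (f (j + 1) - 2 * f j + f (j - 1)) * conj (g j)
      = ∑ j ∈ range m, ((f (j + 2) - f (j + 1)) * conj (g (j + 1))
          - (f (j + 1) - f j) * conj (g (j + 1))) := by
    rw [← Ico_add_one_right_eq_Icc, sum_Ico_eq_sum_range, Nat.add_sub_cancel]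
    refine sum_congr rfl fun j _ => ?_
    rw [show 1 + j - 1 = j by omega, add_comm 1 j]
    ring
  have hA : ∑ j ∈ range m, A (j + 1) = ∑ j ∈ range (m + 1), A j := by
    simp [sum_range_succ' A m, A, hg0]
  have hB : ∑ j ∈ range (m + 1), (f (j + 1) - f j) * conj (g (j + 1))
      = ∑ j ∈ range m, (f (j + 1) - f j) * conj (g (j + 1)) := by
    simp [sum_range_succ _ m, hgn]
  rw [Nat.add_sub_cancel, hshift, sum_sub_distrib, hA]
  simp only [A, map_sub, mul_sub, sum_sub_distrib, hB]
  ring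

theorem re_sum_second_diff_mul_conj_nonpos (Φ : ℂ → ℂ) (hΦ0 : Φ 0 = 0)
    (hΦ : ∀ z w, 0 ≤ ((z - w) * conj (Φ z - Φ w)).re)
    (n : ℕ) (f : ℕ → ℂ) (hf0 : f 0 = 0) (hfn : f n = 0) :
    (∑ j ∈ Icc 1 (n - 1), (f (j + 1) - 2 * f j + f (j - 1)) * conj (Φ (f j))).re ≤ 0 := by
  rw [sum_second_diff_mul_conj n f (fun j => Φ (f j)) (by simp [hf0, hΦ0]) (by simp [hfn, hΦ0]),
    neg_re, neg_nonpos, re_sum]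
  exact sum_nonneg fun j _ => hΦ _ _

theorem delta2_mul_eq (Δx Δy : ℝ) (u : ℕ → ℕ → ℂ) (j k : ℕ) (z : ℂ) :
    delta2 Δx Δy u j k * z
      = (((Δx ^ 2)⁻¹ : ℝ) : ℂ) * ((u (j + 1) k - 2 * u j k + u (j - 1) k) * z)
        + (((Δy ^ 2)⁻¹ : ℝ) : ℂ) * ((u j (k + 1) - 2 * u j k + u j (k - 1)) * z) := by
  unfold delta2
  push_cast
  ring

theorem re_sum_delta2_mul_conj_cubic_nonpos (Δx Δy : ℝ) (J K : ℕ) (u : ℕ → ℕ → ℂ)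
    (hu : memX J K u) :
    (∑ j ∈ Icc 1 (J - 1), ∑ k ∈ Icc 1 (K - 1),
      delta2 Δx Δy u j k * conj (cubic (u j k))).re ≤ 0 := by
  obtain ⟨h0k, hJk, hj0, hjK⟩ := hu
  have cubic_zero : cubic 0 = 0 := by simp
  have hx : (∑ k ∈ Icc 1 (K - 1), ∑ j ∈ Icc 1 (J - 1),
      (u (j + 1) k - 2 * u j k + u (j - 1) k) * conj (cubic (u j k))).re ≤ 0 := by
    rw [re_sum]
    exact sum_nonpos fun k _ => re_sum_second_diff_mul_conj_nonpos cubic cubic_zero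
      re_sub_mul_conj_cubic_sub_nonneg J (u · k) (h0k k) (hJk k)
  have hy : (∑ j ∈ Icc 1 (J - 1), ∑ k ∈ Icc 1 (K - 1),
      (u j (k + 1) - 2 * u j k + u j (k - 1)) * conj (cubic (u j k))).re ≤ 0 := by
    rw [re_sum]
    exact sum_nonpos fun j _ => re_sum_second_diff_mul_conj_nonpos cubic cubic_zero
      re_sub_mul_conj_cubic_sub_nonneg K (u j) (hj0 j) (hjK j)
  rw [sum_comm] at hx
  simp only [delta2_mul_eq, sum_add_distrib, ← mul_sum, add_re, re_ofReal_mul]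
  have := mul_nonpos_of_nonneg_of_nonpos (by positivity : 0 ≤ (Δx ^ 2)⁻¹) hx
  have := mul_nonpos_of_nonneg_of_nonpos (by positivity : 0 ≤ (Δy ^ 2)⁻¹) hy
  linarith

theorem stmt12_general (J K : ℕ) (a b c d : ℝ) (hab : a < b) (hcd : c < d)
    (Δx Δy : ℝ) (hΔx : Δx = (b - a) / J) (hΔy : Δy = (d - c) / K)
    (u : ℕ → ℕ → ℂ) (hu : memX J K u) :
    (((Δx * Δy : ℝ) : ℂ) * ∑ j ∈ Finset.Icc 1 (J - 1), ∑ k ∈ Finset.Icc 1 (K - 1),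
        delta2 Δx Δy u j k *
          conj (u j k * ((‖u j k‖ ^ 2 : ℝ) : ℂ))).re ≤ 0 := by
  have hx : 0 ≤ Δx := hΔx ▸ div_nonneg (sub_nonneg.2 hab.le) J.cast_nonneg
  have hy : 0 ≤ Δy := hΔy ▸ div_nonneg (sub_nonneg.2 hcd.le) K.cast_nonneg
  rw [re_ofReal_mul]
  exact mul_nonpos_of_nonneg_of_nonpos (mul_nonneg hx hy)
    (re_sum_delta2_mul_conj_cubic_nonpos Δx Δy J K u hu)

/-- `Re⟨δ²u, u·|u|²⟩_h ≤ 0` for every `u ∈ X_JK`. -/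
theorem stmt12 (J K : ℕ) (hJ : 2 ≤ J) (hK : 2 ≤ K) (a b c d : ℝ) (hab : a < b) (hcd : c < d)
    (Δx Δy : ℝ) (hΔx : Δx = (b - a) / J) (hΔy : Δy = (d - c) / K)
    (u : ℕ → ℕ → ℂ) (hu : memX J K u) :
    (((Δx * Δy : ℝ) : ℂ) * ∑ j ∈ Finset.Icc 1 (J - 1), ∑ k ∈ Finset.Icc 1 (K - 1),
        delta2 Δx Δy u j k *
          conj (u j k * ((‖u j k‖ ^ 2 : ℝ) : ℂ))).re ≤ 0 :=
  stmt12_general J K a b c d hab hcd Δx Δy hΔx hΔy u hu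
end
end
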